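/- arXiv:math/0610089 — 3 statements merged into one kernel-verified Lean document; each statement's English description precedes it below -/
import Mathlib

section
/- For every function ω : ℕ → ℝ with ω(n) → ∞ as n → ∞, the probability that there exists a path in G from u to v of length at most log_{d−1} n − ω(n) is O((d−1)^{−ω(n)}) as n → ∞; in particular this probability tends to 0, so a.a.s. d_G(u,v) ≥ log_{d−1} n − ω(n) (or u and v are not joined by any path). -/
/-!
In a `d`-regular graph every vertex at distance `j ≥ 1` from `u` has a neighbour at distance
`j - 1`, hence at most `d - 1` neighbours at distance `j + 1`; so at most `d (d-1)^(j-1)` vertices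
lie at distance `j`, and at most `1 + d (d-1)^k ≤ (d+1) (d-1)^k` within distance `k`. Taking
`k = ⌊log_{d-1} n - ω⌋`, a uniform `v` is that close to `u` with probability at most
`(d+1)(d-1)^k / n ≤ (d+1)(d-1)^(-ω)`, already for each fixed `d`-regular `G` and each `u`.
The a.a.s. statement follows by passing to the complement, which needs `d`-regular graphs on
`n` vertices to exist (circulant graphs do, for `n > d` with `d n` even).
-/

/- `probGUV d n E` is the probability of `E` under the uniform distribution on triples
`(G, u, v)` with `G` a simple `d`-regular graph on `Fin n` and `u, v` uniform vertices;
it is `0 / 0 = 0` when there is no such graph. -/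
open Classical in
noncomputable def probGUV (d n : ℕ)
    (E : SimpleGraph (Fin n) → Fin n → Fin n → Prop) : ℝ :=
  ((Finset.univ.filter (fun t : SimpleGraph (Fin n) × Fin n × Fin n =>
      t.1.IsRegularOfDegree d ∧ E t.1 t.2.1 t.2.2)).card : ℝ) /
  (((Finset.univ.filter (fun G : SimpleGraph (Fin n) =>
      G.IsRegularOfDegree d)).card : ℝ) * n * n)

def evenFilter (d : ℕ) : Filter ℕ :=
  Filter.atTop ⊓ Filter.principal {n : ℕ | Even (d * n)}

open Finset

lemma ZMod.intCast_injOn_Icc {n : ℕ} {a b : ℤ} (hab : b - a < n) :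
    Set.InjOn (Int.cast : ℤ → ZMod n) (Set.Icc a b) := by
  intro x hx y hy hxy
  rw [ZMod.intCast_eq_intCast_iff_dvd_sub] at hxy
  have := Int.eq_zero_of_abs_lt_dvd hxy
    (abs_lt.mpr ⟨by linarith [hx.2, hy.1], by linarith [hx.1, hy.2]⟩)
  linarith

namespace SimpleGraph

lemma circulantGraph_isRegularOfDegree {A : Type*} [AddGroup A] [Fintype A] [DecidableEq A]
    (S : Finset A) (hS0 : 0 ∉ S) (hSneg : ∀ s ∈ S, -s ∈ S) :
    (circulantGraph (S : Set A)).IsRegularOfDegree #S := by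
  intro v
  rw [← card_neighborFinset_eq_degree]
  refine card_nbij' (v - ·) (fun s => -s + v) (fun w hw => ?_) (fun s hs => ?_) (fun w _ => ?_)
    (fun s _ => ?_)
  · simp only [mem_neighborFinset, circulantGraph_adj, mem_coe] at hw
    rcases hw.2 with h | h
    · exact h
    · simpa using hSneg _ h
  · simp only [mem_neighborFinset, circulantGraph_adj, mem_coe]
    have hsub : v - (-s + v) = s := by simp [sub_eq_add_neg, ← add_assoc]
    refine ⟨fun h => hS0 ?_, Or.inl (by rwa [hsub])⟩
    rwa [← hsub, ← h, sub_self] at hs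
  · simp
  · simp [sub_eq_add_neg]

lemma circulantGraph_intCast_isRegularOfDegree {n : ℕ} [NeZero n] (T : Finset ℤ) {a b c : ℤ}
    (hTab : T ⊆ Icc a b) (hab : b - a < n) (hT0 : ∀ t ∈ T, ¬ (n : ℤ) ∣ t) (hc : (n : ℤ) ∣ 2 * c)
    (hTsymm : ∀ t ∈ T, 2 * c - t ∈ T) :
    (circulantGraph (T.image (Int.cast : ℤ → ZMod n) : Set (ZMod n))).IsRegularOfDegree #T := by
  have hinj : Set.InjOn (Int.cast : ℤ → ZMod n) T :=
    (ZMod.intCast_injOn_Icc hab).mono fun t ht => mem_Icc.mp (hTab ht)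
  rw [← card_image_of_injOn hinj]
  refine circulantGraph_isRegularOfDegree _ (fun h0 => ?_) fun s hs => ?_
  · obtain ⟨t, ht, h⟩ := mem_image.mp h0
    exact hT0 t ht ((ZMod.intCast_zmod_eq_zero_iff_dvd t n).mp h)
  · obtain ⟨t, ht, rfl⟩ := mem_image.mp hs
    refine mem_image.mpr ⟨2 * c - t, hTsymm t ht, ?_⟩
    rw [Int.cast_sub, (ZMod.intCast_zmod_eq_zero_iff_dvd _ n).mpr hc, zero_sub]

open Classical in
lemma exists_isRegularOfDegree_zmod {d n : ℕ} [NeZero n] (hdn : d + 1 ≤ n) (he : Even (d * n)) :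
    ∃ G : SimpleGraph (ZMod n), G.IsRegularOfDegree d := by
  obtain ⟨m, hm | hm⟩ := Nat.even_or_odd' d
  · have hG := circulantGraph_intCast_isRegularOfDegree (n := n) ((Icc (-m : ℤ) m).erase 0)
      (c := 0) (erase_subset _ _) (by omega) (fun t ht hdvd => ?_) (by simp) fun t ht => ?_
    · have hT : #((Icc (-m : ℤ) m).erase 0) = d := by
        rw [card_erase_of_mem (by simp), Int.card_Icc]; omega
      rw [hT] at hG
      exact ⟨_, by convert hG⟩
    all_goals simp only [mem_erase, mem_Icc] at ht
    · exact ht.1 (Int.eq_zero_of_abs_lt_dvd hdvd (abs_lt.mpr (by omega)))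
    · simp only [mem_erase, mem_Icc]; omega
  · obtain ⟨c, hc⟩ : Even n := (Nat.even_mul.mp he).resolve_left (by simp [hm])
    have hG := circulantGraph_intCast_isRegularOfDegree (n := n) (Icc (c - m : ℤ) (c + m)) (c := c)
      (subset_refl _) (by omega) (fun t ht hdvd => ?_) ⟨1, by omega⟩ fun t ht => ?_
    · have hT : #(Icc (c - m : ℤ) (c + m)) = d := by rw [Int.card_Icc]; omega
      rw [hT] at hG
      exact ⟨_, by convert hG⟩
    all_goals simp only [mem_Icc] at ht
    · have := Int.le_of_dvd (by omega) hdvd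
      omega
    · simp only [mem_Icc]; omega

open Classical in
lemma exists_isRegularOfDegree {V : Type*} [Fintype V] {d : ℕ}
    (hdV : d + 1 ≤ Fintype.card V) (he : Even (d * Fintype.card V)) :
    ∃ G : SimpleGraph V, G.IsRegularOfDegree d := by
  have : NeZero (Fintype.card V) := ⟨by omega⟩
  obtain ⟨H, hH⟩ := exists_isRegularOfDegree_zmod hdV he
  let e : V ≃ ZMod (Fintype.card V) := Fintype.equivOfCardEq (by simp)
  exact ⟨H.comap e, fun v => ((Iso.comap e H).degree_eq v).symm.trans (hH _)⟩

variable {V : Type*} {G : SimpleGraph V}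

lemma exists_adj_edist_eq_of_edist_eq_succ {u v : V} {j : ℕ} (h : G.edist u v = j + 1) :
    ∃ w, G.Adj w v ∧ G.edist u w = j := by
  obtain ⟨p, hp⟩ := exists_walk_of_edist_eq_coe (edist_comm.trans h)
  cases p with
  | nil => simp at hp
  | @cons _ w _ hvw q =>
    rw [Walk.length_cons, Nat.add_right_cancel_iff] at hp
    refine ⟨w, hvw.symm, le_antisymm ?_ ?_⟩
    · simpa [edist_comm, hp] using edist_le q
    · have := h ▸ G.edist_triangle (u := u) (v := w) (w := v)
      rwa [edist_eq_one_iff_adj.mpr hvw.symm, ENat.add_le_add_iff_right ENat.one_ne_top] at this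

variable [Fintype V]

variable (G) in
noncomputable def sphereFinset (u : V) (j : ℕ) : Finset V := {v | G.edist u v = j}

@[simp]
lemma mem_sphereFinset {u v : V} {j : ℕ} : v ∈ G.sphereFinset u j ↔ G.edist u v = j := by
  simp [sphereFinset]

lemma sphereFinset_one [DecidableRel G.Adj] (u : V) : G.sphereFinset u 1 = G.neighborFinset u := by
  ext v; simp

lemma sphereFinset_zero [DecidableEq V] (u : V) : G.sphereFinset u 0 = {u} := by
  ext v
  rw [mem_sphereFinset, Nat.cast_zero, edist_eq_zero_iff, mem_singleton, eq_comm]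

variable [DecidableEq V] [DecidableRel G.Adj] {d : ℕ}

lemma card_neighborFinset_inter_sphereFinset_le (hG : G.IsRegularOfDegree d) {u w : V} {j : ℕ}
    (hw : G.edist u w = j + 1) : #(G.neighborFinset w ∩ G.sphereFinset u (j + 2)) ≤ d - 1 := by
  obtain ⟨x, hxw, hx⟩ := exists_adj_edist_eq_of_edist_eq_succ hw
  have hsub : G.neighborFinset w ∩ G.sphereFinset u (j + 2) ⊆ (G.neighborFinset w).erase x := by
    intro v hv
    simp only [mem_inter, mem_sphereFinset] at hv
    refine mem_erase.mpr ⟨?_, hv.1⟩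
    rintro rfl
    rw [hx] at hv
    exact absurd (by exact_mod_cast hv.2 : j = j + 2) (by omega)
  calc _ ≤ _ := card_le_card hsub
    _ = d - 1 := by
      rw [card_erase_of_mem (by simpa using hxw.symm), card_neighborFinset_eq_degree, hG.degree_eq]

lemma card_sphereFinset_add_two_le (hG : G.IsRegularOfDegree d) (u : V) (j : ℕ) :
    #(G.sphereFinset u (j + 2)) ≤ #(G.sphereFinset u (j + 1)) * (d - 1) := by
  refine le_trans (card_le_card fun v hv => ?_) <|
    card_biUnion_le_card_mul _ (fun w => G.neighborFinset w ∩ G.sphereFinset u (j + 2)) _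
      fun w hw => card_neighborFinset_inter_sphereFinset_le hG (mem_sphereFinset.mp hw)
  obtain ⟨w, hwv, hw⟩ := exists_adj_edist_eq_of_edist_eq_succ (mem_sphereFinset.mp hv)
  exact mem_biUnion.mpr ⟨w, mem_sphereFinset.mpr hw, mem_inter.mpr ⟨by simpa using hwv, hv⟩⟩

lemma card_sphereFinset_succ_le (hG : G.IsRegularOfDegree d) (u : V) (j : ℕ) :
    #(G.sphereFinset u (j + 1)) ≤ d * (d - 1) ^ j := by
  induction j with
  | zero => simp [sphereFinset_one, hG.degree_eq]
  | succ j ih =>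
    calc _ ≤ #(G.sphereFinset u (j + 1)) * (d - 1) := card_sphereFinset_add_two_le hG u j
      _ ≤ d * (d - 1) ^ j * (d - 1) := Nat.mul_le_mul_right _ ih
      _ = d * (d - 1) ^ (j + 1) := by ring

lemma card_filter_edist_le_le (hd : 3 ≤ d) (hG : G.IsRegularOfDegree d) (u : V) (k : ℕ) :
    #{v | G.edist u v ≤ k} ≤ 1 + d * (d - 1) ^ k := by
  have hcover : ({v | G.edist u v ≤ k} : Finset V) ⊆
      (range (k + 1)).biUnion (G.sphereFinset u) := by
    intro v hv
    obtain ⟨j, hj, hjk⟩ := ENat.le_natCast_iff.mp (mem_filter.mp hv).2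
    exact mem_biUnion.mpr ⟨j, mem_range.mpr (Nat.lt_succ_of_le hjk), mem_sphereFinset.mpr hj⟩
  calc _ ≤ ∑ j ∈ range (k + 1), #(G.sphereFinset u j) := (card_le_card hcover).trans card_biUnion_le
    _ = 1 + ∑ j ∈ range k, #(G.sphereFinset u (j + 1)) := by
      rw [sum_range_succ', sphereFinset_zero, card_singleton, add_comm]
    _ ≤ 1 + ∑ j ∈ range k, d * (d - 1) ^ j := by
      gcongr with j; exact card_sphereFinset_succ_le hG u j
    _ ≤ 1 + d * (d - 1) ^ k := by
      rw [← mul_sum]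
      gcongr
      exact (Nat.geomSum_lt (by omega) fun j hj => mem_range.mp hj).le

end SimpleGraph

section

open Classical

variable {d n : ℕ}

lemma card_filter_isRegularOfDegree_triple (E : SimpleGraph (Fin n) → Fin n → Fin n → Prop) :
    #{t : SimpleGraph (Fin n) × Fin n × Fin n | t.1.IsRegularOfDegree d ∧ E t.1 t.2.1 t.2.2} =
      ∑ G with G.IsRegularOfDegree d, ∑ u, #{v | E G u v} := by
  rw [card_filter, Fintype.sum_prod_type, sum_filter]
  refine sum_congr rfl fun G _ => ?_
  split_ifs with hG
  · simp only [hG, true_and, Fintype.sum_prod_type, card_filter]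
  · simp [hG]

lemma probGUV_nonneg (E : SimpleGraph (Fin n) → Fin n → Fin n → Prop) : 0 ≤ probGUV d n E := by
  unfold probGUV; positivity

lemma probGUV_mono {E F : SimpleGraph (Fin n) → Fin n → Fin n → Prop}
    (h : ∀ G u v, E G u v → F G u v) : probGUV d n E ≤ probGUV d n F := by
  unfold probGUV
  gcongr
  exact h _ _ _

lemma probGUV_le_of_forall_card_le {E : SimpleGraph (Fin n) → Fin n → Fin n → Prop} {B : ℝ}
    (hB0 : 0 ≤ B) (hB : ∀ G : SimpleGraph (Fin n), G.IsRegularOfDegree d → ∀ u,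
      (#{v | E G u v} : ℝ) ≤ n * B) :
    probGUV d n E ≤ B := by
  unfold probGUV
  refine div_le_of_le_mul₀ (by positivity) hB0 ?_
  rw [card_filter_isRegularOfDegree_triple]
  push_cast
  calc _ ≤ ∑ G with G.IsRegularOfDegree d, ∑ _u : Fin n, (n * B) :=
        sum_le_sum fun G hG => sum_le_sum fun u _ => hB G (mem_filter.mp hG).2 u
    _ = _ := by simp only [sum_const, card_univ, Fintype.card_fin, nsmul_eq_mul]; ring

lemma probGUV_add_probGUV_not (E : SimpleGraph (Fin n) → Fin n → Fin n → Prop) (hn : 0 < n)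
    (hreg : ∃ G : SimpleGraph (Fin n), G.IsRegularOfDegree d) :
    probGUV d n E + probGUV d n (fun G u v => ¬ E G u v) = 1 := by
  unfold probGUV
  obtain ⟨G₀, hG₀⟩ := hreg
  have hR : (0 : ℝ) < #{G : SimpleGraph (Fin n) | G.IsRegularOfDegree d} := by
    exact_mod_cast card_pos.mpr ⟨G₀, mem_filter.mpr ⟨mem_univ _, hG₀⟩⟩
  rw [← add_div, div_eq_one_iff_eq (by positivity), card_filter_isRegularOfDegree_triple,
    card_filter_isRegularOfDegree_triple (fun G u v => ¬ E G u v)]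
  push_cast
  simp only [← sum_add_distrib, ← Nat.cast_add, card_filter_add_card_filter_not]
  simp only [card_univ, Fintype.card_fin, sum_const, nsmul_eq_mul]
  ring

lemma probGUV_le_one (E : SimpleGraph (Fin n) → Fin n → Fin n → Prop) (hn : 0 < n)
    (hreg : ∃ G : SimpleGraph (Fin n), G.IsRegularOfDegree d) : probGUV d n E ≤ 1 := by
  linarith [probGUV_add_probGUV_not E hn hreg, probGUV_nonneg (d := d) (fun G u v => ¬ E G u v)]

lemma one_sub_probGUV_le {E F : SimpleGraph (Fin n) → Fin n → Fin n → Prop}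
    (hn : 0 < n) (hreg : ∃ G : SimpleGraph (Fin n), G.IsRegularOfDegree d)
    (h : ∀ G u v, ¬ E G u v → F G u v) : 1 - probGUV d n F ≤ probGUV d n E := by
  linarith [probGUV_add_probGUV_not E hn hreg, probGUV_mono (d := d) h]

end

lemma pow_floor_logb_sub_le {b x w : ℝ} (hb : 1 < b) (hx : 0 < x) (hL : 0 ≤ Real.logb b x - w) :
    b ^ ⌊Real.logb b x - w⌋₊ ≤ x * b ^ (-w) := by
  have hb0 : 0 < b := by linarith
  calc b ^ ⌊Real.logb b x - w⌋₊ = b ^ (⌊Real.logb b x - w⌋₊ : ℝ) := (Real.rpow_natCast _ _).symm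
    _ ≤ b ^ (Real.logb b x - w) := Real.rpow_le_rpow_of_exponent_le hb.le (Nat.floor_le hL)
    _ = x * b ^ (-w) := by
      rw [sub_eq_add_neg, Real.rpow_add hb0, Real.rpow_logb hb0 hb.ne' hx]

lemma one_lt_natCast_sub_one {d : ℕ} (hd : 3 ≤ d) : (1 : ℝ) < d - 1 := by
  have : (3 : ℝ) ≤ d := by exact_mod_cast hd
  linarith

open Classical in
theorem probGUV_exists_short_path_le {d : ℕ} (hd : 3 ≤ d) (n : ℕ) (w : ℝ) :
    probGUV d n (fun G u v => ∃ p : G.Walk u v, p.IsPath ∧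
      (p.length : ℝ) ≤ Real.logb ((d : ℝ) - 1) n - w) ≤ (d + 1) * ((d : ℝ) - 1) ^ (-w) := by
  have hb := one_lt_natCast_sub_one hd
  refine probGUV_le_of_forall_card_le (by positivity) fun G hG u => ?_
  set L := Real.logb ((d : ℝ) - 1) n - w
  rcases lt_or_ge L 0 with hL | hL
  · have hempty : ({v | ∃ p : G.Walk u v, p.IsPath ∧ (p.length : ℝ) ≤ L} : Finset (Fin n)) = ∅ :=
      filter_eq_empty_iff.mpr fun v _ ⟨p, _, hp⟩ => by
        linarith [(Nat.cast_nonneg p.length : (0 : ℝ) ≤ p.length)]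
    rw [hempty, card_empty, Nat.cast_zero]
    positivity
  · have hsub : ({v | ∃ p : G.Walk u v, p.IsPath ∧ (p.length : ℝ) ≤ L} : Finset (Fin n)) ⊆
        ({v | G.edist u v ≤ ⌊L⌋₊} : Finset (Fin n)) := fun v hv => by
      obtain ⟨p, _, hp⟩ := (mem_filter.mp hv).2
      exact mem_filter.mpr ⟨mem_univ _, (SimpleGraph.edist_le p).trans
        (by exact_mod_cast Nat.le_floor hp)⟩
    have hball : ((#{v | G.edist u v ≤ ⌊L⌋₊} : ℕ) : ℝ) ≤ 1 + d * ((d : ℝ) - 1) ^ ⌊L⌋₊ := by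
      have := SimpleGraph.card_filter_edist_le_le hd hG u ⌊L⌋₊
      rw [← Nat.cast_pred (by omega)]
      exact_mod_cast this
    have hone : (1 : ℝ) ≤ ((d : ℝ) - 1) ^ ⌊L⌋₊ := one_le_pow₀ hb.le
    calc (#{v | ∃ p : G.Walk u v, p.IsPath ∧ (p.length : ℝ) ≤ L} : ℝ)
        ≤ #{v | G.edist u v ≤ ⌊L⌋₊} := by exact_mod_cast card_le_card hsub
      _ ≤ (d + 1) * ((d : ℝ) - 1) ^ ⌊L⌋₊ := by linarith
      _ ≤ (d + 1) * (n * ((d : ℝ) - 1) ^ (-w)) := by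
        gcongr
        exact pow_floor_logb_sub_le hb (Nat.cast_pos.mpr u.pos) hL
      _ = n * ((d + 1) * ((d : ℝ) - 1) ^ (-w)) := by ring

/-- The probability that there is a `u`–`v` path of length at most `log_{d-1} n - ω(n)` is
`O((d-1)^{-ω(n)})`; in particular a.a.s. either `u` and `v` are not joined by a path, or
`d_G(u,v) ≥ log_{d-1} n - ω(n)`. -/
theorem distance_lower_bound_random_regular (d : ℕ) (hd : 3 ≤ d)
    (ω : ℕ → ℝ) (hω : Filter.Tendsto ω Filter.atTop Filter.atTop) :
    (∃ C : ℝ, ∀ᶠ n : ℕ in evenFilter d,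
      probGUV d n (fun G u v =>
        ∃ p : G.Walk u v, p.IsPath ∧ (p.length : ℝ) ≤ Real.logb ((d : ℝ) - 1) n - ω n)
        ≤ C * ((d : ℝ) - 1) ^ (-(ω n))) ∧
    Filter.Tendsto
      (fun n : ℕ => probGUV d n (fun G u v =>
        ¬ G.Reachable u v ∨ (G.dist u v : ℝ) ≥ Real.logb ((d : ℝ) - 1) n - ω n))
      (evenFilter d) (nhds 1) := by
  have hb := one_lt_natCast_sub_one hd
  classical
  refine ⟨⟨d + 1, .of_forall fun n => probGUV_exists_short_path_le hd n (ω n)⟩, ?_⟩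
  have hsmall : Filter.Tendsto (fun n => (d + 1 : ℝ) * ((d : ℝ) - 1) ^ (-(ω n)))
      (evenFilter d) (nhds 0) := by
    have hωe : Filter.Tendsto ω (evenFilter d) Filter.atTop := hω.mono_left inf_le_left
    simpa using ((tendsto_rpow_atBot_of_base_gt_one _ hb).comp
      (Filter.tendsto_neg_atTop_atBot.comp hωe)).const_mul (d + 1 : ℝ)
  have hgood : ∀ᶠ n in evenFilter d, 0 < n ∧ ∃ G : SimpleGraph (Fin n), G.IsRegularOfDegree d := by
    rw [evenFilter, Filter.eventually_inf_principal]
    filter_upwards [Filter.eventually_ge_atTop (d + 1)] with n hn he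
    exact ⟨by omega,
      SimpleGraph.exists_isRegularOfDegree (V := Fin n) (by simpa using hn) (by simpa using he)⟩
  refine tendsto_of_tendsto_of_tendsto_of_le_of_le' (by simpa using tendsto_const_nhds.sub hsmall)
    tendsto_const_nhds ?_ ?_ <;> filter_upwards [hgood] with n ⟨hn, hreg⟩
  · refine le_trans (by linarith [probGUV_exists_short_path_le hd n (ω n)])
      (one_sub_probGUV_le hn hreg fun G u v h => ?_)
    push Not at h
    obtain ⟨p, hp, hlen⟩ := h.1.exists_path_of_dist
    exact ⟨p, hp, hlen ▸ h.2.le⟩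
  · exact probGUV_le_one _ hn hreg
end

section
/- For every integer d ≥ 3 and every real number γ, the identity Σ_{k∈ℤ} d(d−1)^{2k−2γ−2} · exp(−d(d−1)^{2k−2γ−1}/(d−2)) · (1 + (d−1)·exp(−d(d−1)^{2k−2γ−1})) = ((d−2)/(d−1)) · [ S_c(−γ + log_c(d/((d−1)(d−2)))) + S_c(−γ + log_c(d/(d−2))) ] holds, where c = (d−1)², log_c is the logarithm to base c, and S_c(x) = Σ_{m∈ℤ} c^{m+x} exp(−c^{m+x}); all the series involved converge absolutely. -/
open Real

lemma te_le {t : ℝ} (ht : 0 < t) : t * Real.exp (-t) ≤ 4 / t := by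
  have h : t / 2 ≤ Real.exp (t / 2) :=
    le_trans (by linarith) (Real.add_one_le_exp (t / 2))
  have h2 : (t / 2) * (t / 2) ≤ Real.exp (t / 2) * Real.exp (t / 2) :=
    mul_self_le_mul_self (by positivity) h
  rw [← Real.exp_add] at h2
  have h3 : t / 2 + t / 2 = t := by ring
  rw [h3] at h2
  have key : t * t ≤ 4 * Real.exp t := by nlinarith [h2]
  rw [le_div_iff₀ ht, Real.exp_neg]
  have he := Real.exp_pos t
  calc t * (Real.exp t)⁻¹ * t = (t * t) * (Real.exp t)⁻¹ := by ring
    _ ≤ (4 * Real.exp t) * (Real.exp t)⁻¹ := by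
        apply mul_le_mul_of_nonneg_right key (by positivity)
    _ = 4 := by field_simp

lemma sfun_summable {c : ℝ} (hc : 1 < c) (x : ℝ) :
    Summable fun m : ℤ => c ^ ((m : ℝ) + x) * Real.exp (-(c ^ ((m : ℝ) + x))) := by
  have hc0 : (0:ℝ) < c := lt_trans one_pos hc
  have hgeo : Summable fun n : ℕ => (c⁻¹) ^ n :=
    summable_geometric_of_lt_one (by positivity) (inv_lt_one_of_one_lt₀ hc)
  have hpow : ∀ n : ℕ, (c⁻¹ : ℝ) ^ n = c ^ (-(n : ℝ)) := by
    intro n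
    rw [inv_pow, ← Real.rpow_natCast c n, ← Real.rpow_neg hc0.le]
  apply Summable.of_nat_of_neg
  · apply Summable.of_nonneg_of_le (fun n => by positivity)
      (fun n => ?_) (hgeo.mul_left (4 * c ^ (-x)))
    have ht : (0:ℝ) < c ^ ((n : ℝ) + x) := Real.rpow_pos_of_pos hc0 _
    calc c ^ ((n : ℝ) + x) * Real.exp (-(c ^ ((n : ℝ) + x))) ≤ 4 / c ^ ((n : ℝ) + x) :=
          te_le ht
      _ = 4 * c ^ (-x) * c⁻¹ ^ n := by
          rw [hpow, div_eq_iff ht.ne', mul_assoc, ← Real.rpow_add hc0, mul_assoc,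
            ← Real.rpow_add hc0]
          norm_num
  · apply Summable.of_nonneg_of_le (fun n => by positivity)
      (fun n => ?_) (hgeo.mul_left (c ^ x))
    calc c ^ (((-n : ℤ) : ℝ) + x) * Real.exp (-(c ^ (((-n : ℤ) : ℝ) + x)))
        ≤ c ^ (((-n : ℤ) : ℝ) + x) * 1 := by
          apply mul_le_mul_of_nonneg_left _ (le_of_lt (Real.rpow_pos_of_pos hc0 _))
          exact Real.exp_le_one_iff.2 (neg_nonpos.2 (Real.rpow_pos_of_pos hc0 _).le)
      _ = c ^ x * c⁻¹ ^ n := by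
          rw [mul_one, hpow, ← Real.rpow_add hc0]
          push_cast
          ring_nf

/-- `S_c(x) = Σ_{m ∈ ℤ} c^{m+x} exp(-c^{m+x})`, a period-one function of `x`. -/
noncomputable def Sfun (c x : ℝ) : ℝ :=
  ∑' m : ℤ, c ^ ((m : ℝ) + x) * Real.exp (-(c ^ ((m : ℝ) + x)))

lemma rpow_base_sq {a : ℝ} (ha : 0 ≤ a) (s : ℝ) : ((a ^ (2 : ℕ)) : ℝ) ^ s = a ^ (2 * s) := by
  rw [← Real.rpow_natCast a 2, ← Real.rpow_mul ha]
  norm_num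

/-- The identity expressing the probability of a unique geodesic-type sum in terms of the
period-one function `S_c`, with `c = (d-1)²`; all series involved converge absolutely. -/
theorem sum_eq_S_function (d : ℤ) (hd : 3 ≤ d) (γ : ℝ) :
    (Summable fun k : ℤ =>
      (d : ℝ) * ((d : ℝ) - 1) ^ (2 * (k : ℝ) - 2 * γ - 2) *
        Real.exp (-((d : ℝ) * ((d : ℝ) - 1) ^ (2 * (k : ℝ) - 2 * γ - 1) / ((d : ℝ) - 2))) *
        (1 + ((d : ℝ) - 1) *
          Real.exp (-((d : ℝ) * ((d : ℝ) - 1) ^ (2 * (k : ℝ) - 2 * γ - 1))))) ∧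
    (∀ x : ℝ, Summable fun m : ℤ =>
      (((d : ℝ) - 1) ^ (2 : ℕ)) ^ ((m : ℝ) + x) *
        Real.exp (-((((d : ℝ) - 1) ^ (2 : ℕ)) ^ ((m : ℝ) + x)))) ∧
    (∑' k : ℤ,
        (d : ℝ) * ((d : ℝ) - 1) ^ (2 * (k : ℝ) - 2 * γ - 2) *
          Real.exp (-((d : ℝ) * ((d : ℝ) - 1) ^ (2 * (k : ℝ) - 2 * γ - 1) / ((d : ℝ) - 2))) *
          (1 + ((d : ℝ) - 1) *
            Real.exp (-((d : ℝ) * ((d : ℝ) - 1) ^ (2 * (k : ℝ) - 2 * γ - 1))))) =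
      ((d : ℝ) - 2) / ((d : ℝ) - 1) *
        (Sfun (((d : ℝ) - 1) ^ (2 : ℕ))
            (-γ + Real.logb (((d : ℝ) - 1) ^ (2 : ℕ))
              ((d : ℝ) / (((d : ℝ) - 1) * ((d : ℝ) - 2)))) +
          Sfun (((d : ℝ) - 1) ^ (2 : ℕ))
            (-γ + Real.logb (((d : ℝ) - 1) ^ (2 : ℕ)) ((d : ℝ) / ((d : ℝ) - 2)))) := by
  have hd3 : (3 : ℝ) ≤ (d : ℝ) := by exact_mod_cast hd
  set D : ℝ := (d : ℝ) with hD
  have h1 : (1 : ℝ) < D - 1 := by linarith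
  have h10 : (0 : ℝ) < D - 1 := by linarith
  have h20 : (0 : ℝ) < D - 2 := by linarith
  have hD0 : (0 : ℝ) < D := by linarith
  set c : ℝ := (D - 1) ^ (2 : ℕ) with hc_def
  have hc : (1 : ℝ) < c := by
    rw [hc_def]; nlinarith
  have hc0 : (0 : ℝ) < c := lt_trans one_pos hc
  have hy1 : (0 : ℝ) < D / ((D - 1) * (D - 2)) := by positivity
  have hy2 : (0 : ℝ) < D / (D - 2) := by positivity
  set x1 : ℝ := -γ + Real.logb c (D / ((D - 1) * (D - 2))) with hx1
  set x2 : ℝ := -γ + Real.logb c (D / (D - 2)) with hx2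
  -- termwise identity
  have key : ∀ k : ℤ,
      D * (D - 1) ^ (2 * (k : ℝ) - 2 * γ - 2) *
        Real.exp (-(D * (D - 1) ^ (2 * (k : ℝ) - 2 * γ - 1) / (D - 2))) *
        (1 + (D - 1) * Real.exp (-(D * (D - 1) ^ (2 * (k : ℝ) - 2 * γ - 1)))) =
      (D - 2) / (D - 1) *
        (c ^ ((k : ℝ) + x1) * Real.exp (-(c ^ ((k : ℝ) + x1))) +
         c ^ ((k : ℝ) + x2) * Real.exp (-(c ^ ((k : ℝ) + x2)))) := by
    intro k
    set B : ℝ := (D - 1) ^ (2 * (k : ℝ) - 2 * γ - 1) with hB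
    have hB0 : 0 < B := Real.rpow_pos_of_pos h10 _
    have E0 : (D - 1) ^ (2 * (k : ℝ) - 2 * γ - 2) = B / (D - 1) := by
      rw [hB, ← Real.rpow_sub_one h10.ne']
      congr 1; ring
    have Ebase : ∀ y : ℝ, 0 < y → c ^ ((k : ℝ) + (-γ + Real.logb c y)) = B * (D - 1) * y := by
      intro y hy
      have : (k : ℝ) + (-γ + Real.logb c y) = ((k : ℝ) - γ) + Real.logb c y := by ring
      rw [this, Real.rpow_add hc0, Real.rpow_logb hc0 hc.ne' hy, hc_def,
        rpow_base_sq h10.le]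
      have hEB : (D - 1) ^ (2 * ((k : ℝ) - γ)) = B * (D - 1) := by
        rw [hB, ← Real.rpow_add_one h10.ne']
        congr 1; ring
      rw [hEB]
    have E1 : c ^ ((k : ℝ) + x1) = D * B / (D - 2) := by
      rw [hx1, Ebase _ hy1]
      field_simp
    have E2 : c ^ ((k : ℝ) + x2) = D * B * (D - 1) / (D - 2) := by
      rw [hx2, Ebase _ hy2]
      field_simp
    rw [E0, E1, E2]
    have hE : -(D * B * (D - 1) / (D - 2)) = -(D * B / (D - 2)) + -(D * B) := by
      field_simp
      ring
    rw [hE, Real.exp_add]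
    field_simp
  have hs1 := sfun_summable hc x1
  have hs2 := sfun_summable hc x2
  refine ⟨((hs1.add hs2).mul_left ((D - 2) / (D - 1))).congr fun k => (key k).symm,
    fun x => sfun_summable hc x, ?_⟩
  rw [tsum_congr key, tsum_mul_left, Summable.tsum_add hs1 hs2]
  rfl
end

section
/- (Poisson summation identity for S_c) For every real c > 1 and every real x, the series S_c(x) = Σ_{m∈ℤ} c^{m+x} exp(−c^{m+x}) converges absolutely and equals (1/log c) · Σ_{m∈ℤ} Γ(1 + 2πim/log c) · exp(−2πimx), where Γ is the Gamma function of a complex variable, log is the natural logarithm, and the series on the right converges absolutely. -/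
open Real Filter Asymptotics ComplexConjugate
open scoped FourierTransform

section ExpDecay

variable {E F : Type*} [NormedAddCommGroup E] [NormedAddCommGroup F]

def HasExpDecay (φ : ℝ → E) : Prop :=
  ∃ C a : ℝ, 0 < a ∧ ∀ t, ‖φ t‖ ≤ C * Real.exp (-(a * |t|))

namespace HasExpDecay

variable {φ : ℝ → E}

theorem of_norm_le {ψ : ℝ → F} {K : ℝ} (hφ : HasExpDecay φ) (hψ : ∀ t, ‖ψ t‖ ≤ K * ‖φ t‖) :
    HasExpDecay ψ := by
  obtain ⟨C, a, ha, hC⟩ := hφ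
  refine ⟨|K| * C, a, ha, fun t => ?_⟩
  calc ‖ψ t‖ ≤ K * ‖φ t‖ := hψ t
    _ ≤ |K| * ‖φ t‖ := by gcongr; exact le_abs_self K
    _ ≤ |K| * (C * Real.exp (-(a * |t|))) := by gcongr; exact hC t
    _ = |K| * C * Real.exp (-(a * |t|)) := by ring

theorem comp_mul_left (hφ : HasExpDecay φ) {b : ℝ} (hb : b ≠ 0) :
    HasExpDecay fun t => φ (b * t) := by
  obtain ⟨C, a, ha, hC⟩ := hφ
  refine ⟨C, a * |b|, by positivity, fun t => ?_⟩
  simpa [abs_mul, mul_assoc] using hC (b * t)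

theorem comp_add_right (hφ : HasExpDecay φ) (x : ℝ) : HasExpDecay fun t => φ (t + x) := by
  obtain ⟨C, a, ha, hC⟩ := hφ
  have hC0 : 0 ≤ C := nonneg_of_mul_nonneg_left ((norm_nonneg _).trans (hC 0)) (Real.exp_pos _)
  refine ⟨C * Real.exp (a * |x|), a, ha, fun t => (hC (t + x)).trans ?_⟩
  have : |t| ≤ |t + x| + |x| := by simpa using abs_sub (t + x) x
  rw [mul_assoc, ← Real.exp_add]
  gcongr
  nlinarith

theorem isBigO_rpow (hφ : HasExpDecay φ) (b : ℝ) : φ =O[cocompact ℝ] (|·| ^ (-b)) := by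
  obtain ⟨C, a, ha, hC⟩ := hφ
  have hexp : (fun t : ℝ => Real.exp (-(a * |t|))) =O[cocompact ℝ] (|·| ^ (-b)) := by
    simpa [Function.comp_def] using (isLittleO_exp_neg_mul_rpow_atTop ha (-b)).isBigO.comp_tendsto
      (tendsto_norm_cocompact_atTop (E := ℝ))
  refine (isBigO_of_le' (c := C) _ fun t => ?_).trans hexp
  rw [Real.norm_of_nonneg (Real.exp_pos _).le]
  exact hC t

theorem summable_norm_int (hφ : HasExpDecay φ) : Summable fun m : ℤ => ‖φ m‖ :=
  summable_of_isBigO (Real.summable_abs_int_rpow one_lt_two)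
    ((hφ.isBigO_rpow 2).norm_left.comp_tendsto Int.tendsto_coe_cofinite)

end HasExpDecay

end ExpDecay

theorem Real.mul_exp_half_le_four_mul_sinh {t : ℝ} (ht : 0 ≤ t) :
    t * Real.exp (t / 2) ≤ 4 * Real.sinh t := by
  set u := Real.exp (t / 2)
  have hu : t / 2 + 1 ≤ u := Real.add_one_le_exp _
  have hexp : Real.exp t = u * u := by rw [← Real.exp_add, add_halves]
  have hexp_neg : Real.exp (-t) ≤ 1 := Real.exp_le_one_iff.mpr (by linarith)
  rw [Real.sinh_eq, hexp]
  nlinarith [mul_le_mul_of_nonneg_right hu (Real.exp_pos (t / 2)).le]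

namespace Complex

theorem norm_Gamma_one_add_mul_I_sq_mul_sinh (y : ℝ) :
    ‖Gamma (1 + y * I)‖ ^ 2 * Real.sinh (π * y) = π * y := by
  rcases eq_or_ne y 0 with rfl | hy
  · simp
  have hyI : (y : ℂ) * I ≠ 0 := by simp [hy]
  have hsinh : Real.sinh (π * y) ≠ 0 := by simp [Real.pi_ne_zero, hy]
  have hsin : sin (π * (y * I)) = Real.sinh (π * y) * I := by
    rw [← mul_assoc, ← ofReal_mul, sin_mul_I, ofReal_sinh]
  have hconj : conj (Gamma (1 + y * I)) = Gamma (1 - y * I) := by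
    rw [← Gamma_conj]; simp [sub_eq_add_neg]
  -- `Γ(1 + iy) · conj Γ(1 + iy) = iy · Γ(iy) Γ(1 - iy) = iy · π / sin(iπy)` by Euler's reflection
  have key : ((‖Gamma (1 + y * I)‖ ^ 2 : ℝ) : ℂ) = π * y / Real.sinh (π * y) := by
    rw [ofReal_pow, ← mul_conj', hconj, add_comm, Gamma_add_one _ hyI, mul_assoc,
      Gamma_mul_Gamma_one_sub, hsin]
    field_simp
  exact_mod_cast (eq_div_iff (by exact_mod_cast hsinh)).mp key

theorem norm_Gamma_one_add_neg_mul_I (y : ℝ) :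
    ‖Gamma (1 + ((-y : ℝ) : ℂ) * I)‖ = ‖Gamma (1 + y * I)‖ := by
  rw [← norm_conj, ← Gamma_conj]
  simp

theorem norm_Gamma_one_add_mul_I_le (y : ℝ) :
    ‖Gamma (1 + y * I)‖ ≤ 2 * Real.exp (-(π / 4 * |y|)) := by
  wlog hy : 0 ≤ y generalizing y with H
  · have := H (-y) (by linarith)
    rwa [norm_Gamma_one_add_neg_mul_I, abs_neg] at this
  rcases hy.eq_or_lt with rfl | hy_pos
  · simp
  have ht : 0 < π * y := by positivity
  have hΓ : ‖Gamma (1 + y * I)‖ ^ 2 ≤ (2 * Real.exp (-(π / 4 * |y|))) ^ 2 := by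
    rw [abs_of_pos hy_pos, mul_pow, ← Real.exp_nat_mul]
    refine le_of_mul_le_mul_right ?_ (Real.sinh_pos_iff.mpr ht)
    rw [norm_Gamma_one_add_mul_I_sq_mul_sinh]
    calc π * y = π * y * Real.exp (π * y / 2) * Real.exp (-(π * y / 2)) := by
          rw [mul_assoc, ← Real.exp_add, add_neg_cancel, Real.exp_zero, mul_one]
      _ ≤ 4 * Real.sinh (π * y) * Real.exp (-(π * y / 2)) := by
          gcongr ?_ * _; exact Real.mul_exp_half_le_four_mul_sinh ht.le
      _ = 2 ^ 2 * Real.exp ((2 : ℕ) * -(π / 4 * y)) * Real.sinh (π * y) := by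
          push_cast; ring_nf
  exact (pow_le_pow_iff_left₀ (norm_nonneg _) (by positivity) two_ne_zero).mp hΓ

theorem hasExpDecay_Gamma_one_add_mul_I : HasExpDecay fun y : ℝ => Gamma (1 + y * I) :=
  ⟨2, π / 4, by positivity, norm_Gamma_one_add_mul_I_le⟩

end Complex

theorem Real.fourier_comp_mul_left {E : Type*} [NormedAddCommGroup E] [NormedSpace ℂ E]
    (φ : ℝ → E) {a : ℝ} (ha : a ≠ 0) (ξ : ℝ) :
    𝓕 (fun t => φ (a * t)) ξ = |a|⁻¹ • 𝓕 φ (ξ / a) := by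
  rw [Real.fourier_real_eq, Real.fourier_real_eq, ← abs_inv,
    ← MeasureTheory.Measure.integral_comp_mul_left _ a]
  congr 1 with t
  field_simp

noncomputable def gumbelDensity (u : ℝ) : ℝ := Real.exp (-u) * Real.exp (-Real.exp (-u))

@[fun_prop]
theorem continuous_gumbelDensity : Continuous gumbelDensity := by
  unfold gumbelDensity; fun_prop

theorem hasExpDecay_gumbelDensity : HasExpDecay gumbelDensity := by
  refine ⟨1, 1 / 2, by norm_num, fun u => ?_⟩
  rw [gumbelDensity, ← Real.exp_add, Real.norm_of_nonneg (Real.exp_pos _).le, one_mul,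
    Real.exp_le_exp]
  rcases le_or_gt 0 u with hu | hu
  · rw [abs_of_nonneg hu]
    linarith [Real.exp_pos (-u)]
  · rw [abs_of_neg hu]
    nlinarith [Real.quadratic_le_exp_of_nonneg (neg_nonneg.mpr hu.le)]

theorem fourier_gumbelDensity (ξ : ℝ) :
    𝓕 (fun u => (gumbelDensity u : ℂ)) ξ = Complex.Gamma (1 + ↑(2 * π * ξ) * Complex.I) := by
  have hmellin : mellin (fun t : ℝ => (t : ℂ) ^ (1 : ℂ) • ((Real.exp (-t) : ℝ) : ℂ))
      (↑(2 * π * ξ) * Complex.I) = Complex.Gamma (1 + ↑(2 * π * ξ) * Complex.I) := by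
    rw [mellin_cpow_smul, ← Complex.GammaIntegral_eq_mellin, Complex.Gamma_eq_integral (by simp),
      add_comm]
  rw [mellin_eq_fourier] at hmellin
  convert hmellin using 2
  · funext u
    simp [gumbelDensity]
  · simp

theorem rpow_mul_exp_neg_rpow_eq_gumbelDensity {c : ℝ} (hc : 0 < c) (t : ℝ) :
    c ^ t * Real.exp (-c ^ t) = gumbelDensity (-Real.log c * t) := by
  simp [gumbelDensity, Real.rpow_def_of_pos hc]

section PoissonSummation

variable {L : ℝ}

theorem fourier_gumbelDensity_comp_neg_mul (hL : 0 < L) (ξ : ℝ) :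
    𝓕 (fun t => (gumbelDensity (-L * t) : ℂ)) ξ =
      (L⁻¹ : ℂ) * Complex.Gamma (1 + ↑(-(2 * π / L) * ξ) * Complex.I) := by
  rw [Real.fourier_comp_mul_left (fun u => (gumbelDensity u : ℂ)) (neg_ne_zero.mpr hL.ne'),
    fourier_gumbelDensity, abs_neg, abs_of_pos hL, Complex.real_smul, Complex.ofReal_inv,
    show 2 * π * (ξ / -L) = -(2 * π / L) * ξ by ring]

theorem hasExpDecay_fourier_gumbelDensity_comp_neg_mul (hL : 0 < L) :
    HasExpDecay (𝓕 fun t => (gumbelDensity (-L * t) : ℂ)) :=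
  (Complex.hasExpDecay_Gamma_one_add_mul_I.comp_mul_left (b := -(2 * π / L))
    (by simp [hL.ne', Real.pi_ne_zero])).of_norm_le (K := L⁻¹) fun ξ => by
      rw [fourier_gumbelDensity_comp_neg_mul hL, norm_mul, norm_inv, Complex.norm_real,
        Real.norm_of_nonneg hL.le]

theorem hasExpDecay_Gamma_mul_exp (hL : L ≠ 0) (x : ℝ) :
    HasExpDecay fun t : ℝ => Complex.Gamma (1 + 2 * π * Complex.I * t / L) *
      Complex.exp (-(2 * π * Complex.I * t * x)) :=
  (Complex.hasExpDecay_Gamma_one_add_mul_I.comp_mul_left (b := 2 * π / L)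
    (by simp [hL, Real.pi_ne_zero])).of_norm_le (K := 1) fun t => by
      rw [one_mul, norm_mul, Complex.norm_exp, show 1 + 2 * π * Complex.I * t / L =
        1 + ↑(2 * π / L * t) * Complex.I by push_cast; ring]
      simp

theorem tsum_gumbelDensity_comp_neg_mul_add_int (hL : 0 < L) (x : ℝ) :
    ∑' m : ℤ, (gumbelDensity (-L * (x + m)) : ℂ) = (L⁻¹ : ℂ) * ∑' m : ℤ,
      Complex.Gamma (1 + 2 * π * Complex.I * m / L) * Complex.exp (-(2 * π * Complex.I * m * x)) := by
  set f : ℝ → ℂ := fun t => (gumbelDensity (-L * t) : ℂ) with hf_def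
  have hf : HasExpDecay f :=
    (hasExpDecay_gumbelDensity.comp_mul_left (neg_ne_zero.mpr hL.ne')).of_norm_le (K := 1)
      fun t => by simp [f]
  calc ∑' m : ℤ, f (x + m)
      = ∑' n : ℤ, 𝓕 f n * fourier n (x : UnitAddCircle) :=
        Real.tsum_eq_tsum_fourier_of_rpow_decay (by rw [hf_def]; fun_prop) one_lt_two
          (hf.isBigO_rpow 2) ((hasExpDecay_fourier_gumbelDensity_comp_neg_mul hL).isBigO_rpow 2) x
    _ = _ := by
        rw [← tsum_mul_left, ← (Equiv.neg ℤ).tsum_eq]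
        congr with m
        rw [Equiv.neg_apply, fourier_gumbelDensity_comp_neg_mul hL, fourier_coe_apply]
        push_cast
        ring_nf

end PoissonSummation

/-- Poisson summation identity for `S_c`: the series defining `S_c(x)` converges absolutely
and `S_c(x) = (1/log c) Σ_{m ∈ ℤ} Γ(1 + 2πim/log c) exp(-2πimx)`, the right-hand series
converging absolutely. -/
theorem S_function_poisson_summation (c : ℝ) (hc : 1 < c) (x : ℝ) :
    (Summable fun m : ℤ => |c ^ ((m : ℝ) + x) * Real.exp (-(c ^ ((m : ℝ) + x)))|) ∧
    (Summable fun m : ℤ =>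
      ‖Complex.Gamma (1 + 2 * (Real.pi : ℂ) * Complex.I * (m : ℂ) / (Real.log c : ℂ)) *
        Complex.exp (-(2 * (Real.pi : ℂ) * Complex.I * (m : ℂ) * (x : ℂ)))‖) ∧
    ((Sfun c x : ℂ) = (1 / (Real.log c : ℂ)) *
      ∑' m : ℤ,
        Complex.Gamma (1 + 2 * (Real.pi : ℂ) * Complex.I * (m : ℂ) / (Real.log c : ℂ)) *
          Complex.exp (-(2 * (Real.pi : ℂ) * Complex.I * (m : ℂ) * (x : ℂ)))) := by
  have hL : 0 < Real.log c := Real.log_pos hc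
  have hsummand := rpow_mul_exp_neg_rpow_eq_gumbelDensity (zero_lt_one.trans hc)
  refine ⟨?_, ?_, ?_⟩
  · simpa [hsummand] using ((hasExpDecay_gumbelDensity.comp_mul_left
      (neg_ne_zero.mpr hL.ne')).comp_add_right x).summable_norm_int
  · simpa using (hasExpDecay_Gamma_mul_exp hL.ne' x).summable_norm_int
  · rw [Sfun, Complex.ofReal_tsum, one_div, ← tsum_gumbelDensity_comp_neg_mul_add_int hL x]
    congr with m
    rw [hsummand, add_comm]
end
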